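/- arXiv:2007.11968 — 2 statements merged into one kernel-verified Lean document; each statement's English description precedes it below -/
import Mathlib

section
/- Fix amplitude A > 0 and let (v(t), w(t)) solve v' = F(v) − w + I_A^β(t), w' = b·v − c·w with initial condition at the resting fixed point (v*, w*) of the unforced system. Let U be an open interval containing v* on which the vector field is 2k-Lipschitz (k ≥ max(1, b, c)). Then for all t up to the exit time from U (capped at 2T_A^β), |v(t) − v*| + |w(t) − w*| ≤ (A²/β)·e^{4kA/β}. In particular, for β sufficiently large the trajectory remains in any prescribed neighborhood of (v*, w*) throughout [0, 2T_A^β]. -/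
/-!
Subtracting the primitive `J(t) = ∫₀ᵗ I_A^β` from the `v`-component removes the forcing: the
difference has derivative equal to the unforced vector field, which is `2k`-Lipschitz in the
`ℓ¹` norm and vanishes at the equilibrium. Since `0 ≤ J ≤ A²/β` on `[0, 2T_A^β]`, Grönwall's
inequality with constant forcing `2k · A²/β` bounds the difference by `(A²/β)(e^{2kt} - 1)`, and
adding `J` back gives `(A²/β) e^{2kt} ≤ (A²/β) e^{4kA/β}`.
-/

/-- The tent input of amplitude `A` and slope `β`: `β t` on `[0, A/β]`,
`β (2A/β - t)` on `[A/β, 2A/β]`, and `0` otherwise. -/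
noncomputable def tent (A β t : ℝ) : ℝ :=
  if 0 ≤ t ∧ t ≤ A / β then β * t
  else if A / β ≤ t ∧ t ≤ 2 * (A / β) then β * (2 * (A / β) - t)
  else 0

open Set Real WithLp

section Tent

variable {A β : ℝ}

lemma tent_of_le {t : ℝ} (ht₀ : 0 ≤ t) (ht : t ≤ A / β) : tent A β t = β * t :=
  if_pos ⟨ht₀, ht⟩

lemma tent_of_ge {t : ℝ} (ht : A / β ≤ t) (ht₁ : t ≤ 2 * (A / β)) :
    tent A β t = β * (2 * (A / β) - t) := by
  unfold tent
  split_ifs with h h'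
  · rw [le_antisymm h.2 ht]
    ring
  · rfl
  · exact absurd ⟨ht, ht₁⟩ h'

lemma tent_eq_max_min (hA : 0 < A) (hβ : 0 < β) (t : ℝ) :
    tent A β t = max 0 (min (β * t) (β * (2 * (A / β) - t))) := by
  have hT : 0 < A / β := div_pos hA hβ
  unfold tent
  split_ifs with h₁ h₂
  · rw [min_eq_left (by nlinarith [h₁.1, h₁.2]), max_eq_right (by nlinarith [h₁.1])]
  · rw [min_eq_right (by nlinarith [h₂.1, h₂.2]), max_eq_right (by nlinarith [h₂.2])]
  · refine (max_eq_left ?_).symm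
    rcases le_or_gt 0 t with h₀ | h₀
    · have h2T : 2 * (A / β) < t := by
        by_contra! h
        exact h₂ ⟨le_of_not_ge fun h' => h₁ ⟨h₀, h'⟩, h⟩
      exact (min_le_right _ _).trans (by nlinarith)
    · exact (min_le_left _ _).trans (by nlinarith)

lemma tent_nonneg (hA : 0 < A) (hβ : 0 < β) (t : ℝ) : 0 ≤ tent A β t := by
  rw [tent_eq_max_min hA hβ]
  exact le_max_left _ _

lemma continuous_tent (hA : 0 < A) (hβ : 0 < β) : Continuous (tent A β) := by
  rw [funext (tent_eq_max_min hA hβ)]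
  fun_prop

lemma integral_tent (hA : 0 < A) (hβ : 0 < β) :
    ∫ s in (0:ℝ)..2 * (A / β), tent A β s = A ^ 2 / β := by
  have hT : 0 < A / β := div_pos hA hβ
  have hup : ∫ s in (0:ℝ)..A / β, tent A β s = ∫ s in (0:ℝ)..A / β, β * s := by
    refine intervalIntegral.integral_congr fun s hs => ?_
    rw [uIcc_of_le hT.le] at hs
    exact tent_of_le hs.1 hs.2
  have hdown : ∫ s in A / β..2 * (A / β), tent A β s
      = ∫ s in A / β..2 * (A / β), β * (2 * (A / β) - s) := by
    refine intervalIntegral.integral_congr fun s hs => ?_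
    rw [uIcc_of_le (by linarith)] at hs
    exact tent_of_ge hs.1 hs.2
  have hc := continuous_tent hA hβ
  rw [← intervalIntegral.integral_add_adjacent_intervals (hc.intervalIntegrable _ _)
    (hc.intervalIntegrable _ _), hup, hdown, intervalIntegral.integral_const_mul,
    intervalIntegral.integral_const_mul,
    intervalIntegral.integral_comp_sub_left (fun s => s), integral_id, integral_id]
  field_simp
  ring

lemma abs_integral_tent_le (hA : 0 < A) (hβ : 0 < β) {u : ℝ}
    (hu : u ∈ Icc 0 (2 * (A / β))) : |∫ s in (0:ℝ)..u, tent A β s| ≤ A ^ 2 / β := by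
  have hc := continuous_tent hA hβ
  have hrest : 0 ≤ ∫ s in u..2 * (A / β), tent A β s :=
    intervalIntegral.integral_nonneg hu.2 fun s _ => tent_nonneg hA hβ s
  have hsplit := intervalIntegral.integral_add_adjacent_intervals
    (hc.intervalIntegrable (μ := MeasureTheory.volume) 0 u)
    (hc.intervalIntegrable u (2 * (A / β)))
  rw [integral_tent hA hβ] at hsplit
  rw [abs_of_nonneg (intervalIntegral.integral_nonneg hu.1 fun s _ => tent_nonneg hA hβ s)]
  linarith

end Tent

lemma norm_toLp_one_prod (a b : ℝ) : ‖toLp 1 (a, b)‖ = |a| + |b| := by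
  simp [prod_norm_eq_of_L1]

lemma HasDerivAt.toLp_prod {p : ENNReal} [Fact (1 ≤ p)] {E G : Type*}
    [NormedAddCommGroup E] [NormedSpace ℝ E] [NormedAddCommGroup G] [NormedSpace ℝ G]
    {f : ℝ → E} {g : ℝ → G} {f' : E} {g' : G} {s : ℝ}
    (hf : HasDerivAt f f' s) (hg : HasDerivAt g g' s) :
    HasDerivAt (fun s => toLp p (f s, g s)) (toLp p (f', g')) s :=
  (prodContinuousLinearEquiv p ℝ E G).symm.hasFDerivAt.comp_hasDerivAt s (hf.prodMk hg)

lemma gronwallBound_zero_mul_eq (K M x : ℝ) :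
    gronwallBound 0 K (K * M) x = M * (exp (K * x) - 1) := by
  rcases eq_or_ne K 0 with rfl | hK
  · simp [gronwallBound_K0]
  · rw [gronwallBound_of_K_ne_0 hK]
    field_simp
    ring

theorem norm_le_mul_exp_of_hasDerivAt_add {E : Type*} [NormedAddCommGroup E] [NormedSpace ℝ E]
    {x f P p : ℝ → E} {K M t : ℝ} (hK : 0 ≤ K) (ht : 0 ≤ t)
    (hx : ∀ s ∈ Icc 0 t, HasDerivAt x (f s + p s) s)
    (hP : ∀ s ∈ Icc 0 t, HasDerivAt P (p s) s) (h0 : x 0 = P 0)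
    (hf : ∀ s ∈ Ico 0 t, ‖f s‖ ≤ K * ‖x s‖) (hPM : ∀ s ∈ Icc 0 t, ‖P s‖ ≤ M) :
    ‖x t‖ ≤ M * exp (K * t) := by
  have hderiv : ∀ s ∈ Icc 0 t, HasDerivAt (x - P) (f s) s := fun s hs => by
    simpa using (hx s hs).sub (hP s hs)
  have hbound : ∀ s ∈ Ico 0 t, ‖f s‖ ≤ K * ‖(x - P) s‖ + K * M := fun s hs =>
    calc ‖f s‖ ≤ K * ‖x s‖ := hf s hs
      _ ≤ K * (‖x s - P s‖ + M) := by
        gcongr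
        exact (norm_le_norm_sub_add _ _).trans (by gcongr; exact hPM s (Ico_subset_Icc_self hs))
      _ = K * ‖(x - P) s‖ + K * M := by rw [Pi.sub_apply]; ring
  have hgron := norm_le_gronwallBound_of_norm_deriv_right_le
    (fun s hs => (hderiv s hs).continuousAt.continuousWithinAt)
    (fun s hs => (hderiv s (Ico_subset_Icc_self hs)).hasDerivWithinAt)
    (by simp [h0] : ‖(x - P) 0‖ ≤ 0) hbound t ⟨ht, le_rfl⟩
  rw [sub_zero, gronwallBound_zero_mul_eq, Pi.sub_apply] at hgron
  calc ‖x t‖ ≤ ‖x t - P t‖ + ‖P t‖ := norm_le_norm_sub_add _ _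
    _ ≤ M * (exp (K * t) - 1) + M := add_le_add hgron (hPM t ⟨ht, le_rfl⟩)
    _ = M * exp (K * t) := by ring

lemma abs_add_abs_sub_le_of_lipschitzOnWith {F : ℝ → ℝ} {U : Set ℝ} {k : NNReal} {b c : ℝ}
    (hLip : LipschitzOnWith k F U) (hk : 1 ≤ (k : ℝ)) (hb : |b| ≤ k) (hc : |c| ≤ k)
    {v w v' w' : ℝ} (hv : v ∈ U) (hv' : v' ∈ U) :
    |(F v - w) - (F v' - w')| + |(b * v - c * w) - (b * v' - c * w')|
      ≤ 2 * k * (|v - v'| + |w - w'|) := by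
  have hF : |F v - F v'| ≤ k * |v - v'| := by
    simpa [Real.dist_eq] using hLip.dist_le_mul v hv v' hv'
  calc |(F v - w) - (F v' - w')| + |(b * v - c * w) - (b * v' - c * w')|
      = |(F v - F v') - (w - w')| + |b * (v - v') - c * (w - w')| := by ring_nf
    _ ≤ (|F v - F v'| + |w - w'|) + (|b| * |v - v'| + |c| * |w - w'|) := by
        rw [← abs_mul, ← abs_mul]
        exact add_le_add (abs_sub _ _) (abs_sub _ _)
    _ ≤ (k * |v - v'| + k * |w - w'|) + (k * |v - v'| + k * |w - w'|) := by
        gcongr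
        exact le_mul_of_one_le_left (abs_nonneg _) hk
    _ = 2 * k * (|v - v'| + |w - w'|) := by ring

theorem stmt_5_general (F : ℝ → ℝ) (b c A : ℝ) (k : NNReal)
    (vstar wstar : ℝ) (U : Set ℝ) (hvU : vstar ∈ U)
    (hb : 0 < b) (hc : 0 ≤ c) (hA : 0 < A)
    (hk : max 1 (max b c) ≤ (k : ℝ))
    (hLip : LipschitzOnWith k F U)
    (heq1 : F vstar - wstar = 0) (heq2 : b * vstar - c * wstar = 0)
    (β : ℝ) (hβ : 0 < β)
    (v w : ℝ → ℝ) (hv0 : v 0 = vstar) (hw0 : w 0 = wstar)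
    (hsol : ∀ t ∈ Set.Icc (0:ℝ) (2 * (A / β)),
      HasDerivAt v (F (v t) - w t + tent A β t) t ∧
      HasDerivAt w (b * v t - c * w t) t) :
    ∀ t ∈ Set.Icc (0:ℝ) (2 * (A / β)),
      (∀ s ∈ Set.Icc (0:ℝ) t, v s ∈ U) →
      |v t - vstar| + |w t - wstar| ≤ A ^ 2 / β * Real.exp (4 * k * A / β) := by
  intro t ht hU
  have hk1 : (1:ℝ) ≤ k := le_of_max_le_left hk
  have hbk : |b| ≤ k := (abs_of_pos hb).trans_le (le_of_max_le_left (le_of_max_le_right hk))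
  have hck : |c| ≤ k := (abs_of_nonneg hc).trans_le (le_of_max_le_right (le_of_max_le_right hk))
  have hsub : Icc 0 t ⊆ Icc 0 (2 * (A / β)) := Icc_subset_Icc_right ht.2
  have hstate : ∀ s ∈ Icc 0 t, HasDerivAt (fun s => toLp 1 (v s - vstar, w s - wstar))
      (toLp 1 (F (v s) - w s, b * v s - c * w s) + toLp 1 (tent A β s, (0:ℝ))) s :=
    fun s hs => ((hsol s (hsub hs)).1.sub_const vstar).toLp_prod
      ((hsol s (hsub hs)).2.sub_const wstar) |>.congr_deriv
        (by rw [← toLp_add, Prod.mk_add_mk, add_zero])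
  have hprim : ∀ s, HasDerivAt (fun u => toLp 1 (∫ r in (0:ℝ)..u, tent A β r, (0:ℝ)))
      (toLp 1 (tent A β s, (0:ℝ))) s := fun s =>
    ((continuous_tent hA hβ).integral_hasStrictDerivAt 0 s).hasDerivAt.toLp_prod
      (hasDerivAt_const s 0)
  have hfield : ∀ s ∈ Ico 0 t, ‖toLp 1 (F (v s) - w s, b * v s - c * w s)‖
      ≤ 2 * k * ‖toLp 1 (v s - vstar, w s - wstar)‖ := fun s hs => by
    simpa only [norm_toLp_one_prod, heq1, heq2, sub_zero] using
      abs_add_abs_sub_le_of_lipschitzOnWith (w := w s) (w' := wstar) hLip hk1 hbk hck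
        (hU s (Ico_subset_Icc_self hs)) hvU
  have hprim_le : ∀ s ∈ Icc 0 t, ‖toLp 1 (∫ r in (0:ℝ)..s, tent A β r, (0:ℝ))‖ ≤ A ^ 2 / β :=
    fun s hs => by simpa using abs_integral_tent_le hA hβ (hsub hs)
  have hgron := norm_le_mul_exp_of_hasDerivAt_add (by positivity) ht.1 hstate
    (fun s _ => hprim s) (by simp [hv0, hw0]) hfield hprim_le
  rw [norm_toLp_one_prod] at hgron
  refine hgron.trans (mul_le_mul_of_nonneg_left (exp_le_exp.2 ?_) (by positivity))
  calc 2 * (k : ℝ) * t ≤ 2 * k * (2 * (A / β)) := by gcongr; exact ht.2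
    _ = 4 * k * A / β := by ring

/-- Gronwall bound for the response to the tent input started at the
resting equilibrium `(v*, w*)`: up to the exit time from `U` (capped at `2T_A^β`),
`|v(t) - v*| + |w(t) - w*| ≤ (A²/β) e^{4kA/β}`. -/
theorem stmt_5 (F : ℝ → ℝ) (b c A : ℝ) (k : NNReal)
    (vstar wstar : ℝ) (U : Set ℝ) (hUopen : IsOpen U) (hvU : vstar ∈ U)
    (hb : 0 < b) (hc : 0 ≤ c) (hA : 0 < A)
    (hk : max 1 (max b c) ≤ (k : ℝ))
    (hLip : LipschitzOnWith k F U)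
    (heq1 : F vstar - wstar = 0) (heq2 : b * vstar - c * wstar = 0)
    (β : ℝ) (hβ : 0 < β)
    (v w : ℝ → ℝ) (hv0 : v 0 = vstar) (hw0 : w 0 = wstar)
    (hsol : ∀ t ∈ Set.Icc (0:ℝ) (2 * (A / β)),
      HasDerivAt v (F (v t) - w t + tent A β t) t ∧
      HasDerivAt w (b * v t - c * w t) t) :
    ∀ t ∈ Set.Icc (0:ℝ) (2 * (A / β)),
      (∀ s ∈ Set.Icc (0:ℝ) t, v s ∈ U) →
      |v t - vstar| + |w t - wstar| ≤ A ^ 2 / β * Real.exp (4 * k * A / β) :=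
  stmt_5_general F b c A k vstar wstar U hvU hb hc hA hk hLip heq1 heq2 β hβ v w hv0 hw0 hsol
end

section
/- Let Φ((cw⁻/b, w⁻), t; I) denote the solution of v' = F(v) − w + I, w' = b·v − c·w starting at the point (cw⁻/b, w⁻) on the w-nullcline. Fix a target point (v_t, w_t) with v_t > cw⁻/b and w_t > w⁻, and let k = min{F(v) − w : v ∈ [cw⁻/b, v_t], w ∈ [w⁻, w_t]}. Then the time for the trajectory to reach {v = v_t} is at most (v_t − cw⁻/b)/(k + I) (for I > −k), while the time to reach {w = w_t} is at least (w_t − w⁻)/(b·v_t − c·w⁻). Hence for I sufficiently large, the trajectory reaches {v = v_t} before {w = w_t}. -/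
/-!
Inside the rectangle the vector field satisfies `v' ≥ k + I` and `w' ≤ b v_t - c w⁻`, so the
mean value inequality gives the two linear bounds. The resulting upper bound
`(v_t - c w⁻ / b) / (k + I)` on the time to reach `{v = v_t}` tends to `0` as `I → ∞`, while the
lower bound `(w_t - w⁻) / (b v_t - c w⁻)` on the time to reach `{w = w_t}` is a fixed positive
number.
-/

open Set Filter Topology

theorem mul_sub_le_sub_of_hasDerivAt_Icc {f f' : ℝ → ℝ} {a t C : ℝ} (hat : a ≤ t)
    (hf : ∀ s ∈ Icc a t, HasDerivAt f (f' s) s) (hC : ∀ s ∈ Icc a t, C ≤ f' s) :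
    C * (t - a) ≤ f t - f a :=
  (convex_Icc a t).mul_sub_le_image_sub_of_le_deriv
    (fun s hs => (hf s hs).continuousAt.continuousWithinAt)
    (fun s hs => (hf s (interior_subset hs)).differentiableAt.differentiableWithinAt)
    (fun s hs => (hf s (interior_subset hs)).deriv ▸ hC s (interior_subset hs))
    a (left_mem_Icc.2 hat) t (right_mem_Icc.2 hat) hat

theorem sub_le_mul_sub_of_hasDerivAt_Icc {f f' : ℝ → ℝ} {a t C : ℝ} (hat : a ≤ t)
    (hf : ∀ s ∈ Icc a t, HasDerivAt f (f' s) s) (hC : ∀ s ∈ Icc a t, f' s ≤ C) :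
    f t - f a ≤ C * (t - a) :=
  (convex_Icc a t).image_sub_le_mul_sub_of_deriv_le
    (fun s hs => (hf s hs).continuousAt.continuousWithinAt)
    (fun s hs => (hf s (interior_subset hs)).differentiableAt.differentiableWithinAt)
    (fun s hs => (hf s (interior_subset hs)).deriv ▸ hC s (interior_subset hs))
    a (left_mem_Icc.2 hat) t (right_mem_Icc.2 hat) hat

theorem eventually_div_const_add_lt (A k : ℝ) {R : ℝ} (hR : 0 < R) :
    ∀ᶠ x in atTop, A / (k + x) < R :=
  (tendsto_const_nhds.div_atTop (tendsto_atTop_add_const_left _ k tendsto_id)).eventually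
    (gt_mem_nhds hR)

theorem stmt_15_general (F : ℝ → ℝ)
    (b c wm vt wt k I : ℝ) (hb : 0 < b) (hc : 0 ≤ c)
    (hwt : wm < wt) (hwpos : 0 < b * vt - c * wm)
    (hk : IsGLB ((fun p : ℝ × ℝ => F p.1 - p.2) ''
      (Set.Icc (c * wm / b) vt ×ˢ Set.Icc wm wt)) k)
    (v w : ℝ → ℝ) (hv0 : v 0 = c * wm / b) (hw0 : w 0 = wm)
    (hsol : ∀ t : ℝ, 0 ≤ t →
      HasDerivAt v (F (v t) - w t + I) t ∧ HasDerivAt w (b * v t - c * w t) t) :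
    (∀ t : ℝ, 0 ≤ t →
      (∀ s ∈ Set.Icc (0:ℝ) t,
        v s ∈ Set.Icc (c * wm / b) vt ∧ w s ∈ Set.Icc wm wt) →
      c * wm / b + (k + I) * t ≤ v t ∧ w t ≤ wm + (b * vt - c * wm) * t) ∧
    (∃ I₀ : ℝ, ∀ I' : ℝ, I₀ ≤ I' →
      (vt - c * wm / b) / (k + I') < (wt - wm) / (b * vt - c * wm)) := by
  refine ⟨fun t ht hrect => ?_,
    eventually_atTop.1 (eventually_div_const_add_lt _ k (div_pos (sub_pos.2 hwt) hwpos))⟩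
  have hv_speed : ∀ s ∈ Icc 0 t, k + I ≤ F (v s) - w s + I := fun s hs => by
    have := hk.1 (mem_image_of_mem _ (mk_mem_prod (hrect s hs).1 (hrect s hs).2))
    linarith
  have hw_speed : ∀ s ∈ Icc 0 t, b * v s - c * w s ≤ b * vt - c * wm := fun s hs =>
    sub_le_sub (mul_le_mul_of_nonneg_left (hrect s hs).1.2 hb.le)
      (mul_le_mul_of_nonneg_left (hrect s hs).2.1 hc)
  have hv := mul_sub_le_sub_of_hasDerivAt_Icc ht (fun s hs => (hsol s hs.1).1) hv_speed
  have hw := sub_le_mul_sub_of_hasDerivAt_Icc ht (fun s hs => (hsol s hs.1).2) hw_speed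
  rw [hv0, sub_zero] at hv
  rw [hw0, sub_zero] at hw
  constructor <;> linarith

/-- rectangle estimates for the trajectory of
`v' = F(v) - w + I`, `w' = b v - c w` started at `(c w⁻ / b, w⁻)` on the
`w`-nullcline. While the trajectory stays in the rectangle
`[c w⁻ / b, v_t] × [w⁻, w_t]`, with `k` the minimum of `F(v) - w` there, we have
`v(t) ≥ c w⁻ / b + (k + I) t` (so it reaches `{v = v_t}` by time
`(v_t - c w⁻ / b)/(k + I)`) and `w(t) ≤ w⁻ + (b v_t - c w⁻) t` (so it cannot
reach `{w = w_t}` before time `(w_t - w⁻)/(b v_t - c w⁻)`); hence for `I`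
sufficiently large the former time bound is smaller than the latter. -/
theorem stmt_15 (F : ℝ → ℝ) (hFcont : Continuous F)
    (b c wm vt wt k I : ℝ) (hb : 0 < b) (hc : 0 ≤ c)
    (hvt : c * wm / b < vt) (hwt : wm < wt) (hwpos : 0 < b * vt - c * wm)
    (hk : IsGLB ((fun p : ℝ × ℝ => F p.1 - p.2) ''
      (Set.Icc (c * wm / b) vt ×ˢ Set.Icc wm wt)) k)
    (hI : 0 < k + I)
    (v w : ℝ → ℝ) (hv0 : v 0 = c * wm / b) (hw0 : w 0 = wm)
    (hsol : ∀ t : ℝ, 0 ≤ t →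
      HasDerivAt v (F (v t) - w t + I) t ∧ HasDerivAt w (b * v t - c * w t) t) :
    (∀ t : ℝ, 0 ≤ t →
      (∀ s ∈ Set.Icc (0:ℝ) t,
        v s ∈ Set.Icc (c * wm / b) vt ∧ w s ∈ Set.Icc wm wt) →
      c * wm / b + (k + I) * t ≤ v t ∧ w t ≤ wm + (b * vt - c * wm) * t) ∧
    (∃ I₀ : ℝ, ∀ I' : ℝ, I₀ ≤ I' →
      (vt - c * wm / b) / (k + I') < (wt - wm) / (b * vt - c * wm)) :=
  stmt_15_general F b c wm vt wt k I hb hc hwt hwpos hk v w hv0 hw0 hsol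
end
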